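/- Let n > 1 and let ν be any real number. Then for all x > 0, the integral ∫_x^∞ K_{ν+n}(t)/t^ν dt is strictly greater than K_{ν+n−1}(x)/x^ν; moreover, when n = 1 one has the equality ∫_x^∞ K_{ν+1}(t)/t^ν dt = K_ν(x)/x^ν for all x > 0. -/

import Mathlib

open MeasureTheory Set Real

/-- Modified Bessel function of the second kind:
`K_ν(x) = ∫_0^∞ exp(−x cosh t) cosh(ν t) dt`. -/
noncomputable def besselK (ν x : ℝ) : ℝ :=
  ∫ t in Ioi (0 : ℝ), Real.exp (-(x * Real.cosh t)) * Real.cosh (ν * t)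

/-!
Differentiating under the integral sign, and integrating `e^{-x cosh t} sinh t sinh (ν t)`
by parts, gives `K_ν' = (ν / x) K_ν - K_{ν+1}`, hence
`(K_μ(t) / t^ν)' = (μ - ν) K_μ(t) / t^{ν+1} - K_{μ+1}(t) / t^ν`.
Since `K_μ(t) ≤ e^{x-t} K_μ(x)` for `t ≥ x`, all these functions decay exponentially, and
integrating over `(x, ∞)` gives the recurrence
`∫_x^∞ K_{μ+1}(t) / t^ν dt = K_μ(x) / x^ν + (μ - ν) ∫_x^∞ K_μ(t) / t^{ν+1} dt`.
For `μ = ν + n - 1` the last term is `n - 1` times a positive integral.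
-/

open Filter Topology Asymptotics

lemma sq_div_four_le_cosh (t : ℝ) : t ^ 2 / 4 ≤ cosh t := by
  have hq := quadratic_le_exp_of_nonneg (abs_nonneg t)
  rw [sq_abs] at hq
  rw [← cosh_abs, cosh_eq]
  linarith [exp_pos (-|t|), abs_nonneg t]

lemma abs_cosh_le_exp_abs (t : ℝ) : |cosh t| ≤ exp |t| := by
  rw [abs_of_pos (cosh_pos t), ← cosh_abs, cosh_eq]
  linarith [exp_le_exp.2 (neg_le_self (abs_nonneg t))]

lemma abs_sinh_le_exp_abs (t : ℝ) : |sinh t| ≤ exp |t| := by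
  rw [abs_sinh]
  exact (sinh_lt_cosh _).le.trans ((cosh_abs t).trans_le ((le_abs_self _).trans
    (abs_cosh_le_exp_abs t)))

lemma abs_cosh_mul_cosh_le (ν : ℝ) {t : ℝ} (ht : 0 ≤ t) :
    |cosh t * cosh (ν * t)| ≤ exp ((|ν| + 1) * t) := by
  have h1 := abs_cosh_le_exp_abs t
  have h2 := abs_cosh_le_exp_abs (ν * t)
  rw [abs_of_nonneg ht] at h1
  rw [abs_mul, abs_of_nonneg ht] at h2
  rw [abs_mul, add_mul, one_mul, exp_add, mul_comm (exp _)]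
  exact mul_le_mul h1 h2 (abs_nonneg _) (exp_pos _).le

lemma abs_sinh_mul_sinh_le (ν : ℝ) {t : ℝ} (ht : 0 ≤ t) :
    |sinh t * sinh (ν * t)| ≤ exp ((|ν| + 1) * t) := by
  have h1 := abs_sinh_le_exp_abs t
  have h2 := abs_sinh_le_exp_abs (ν * t)
  rw [abs_of_nonneg ht] at h1
  rw [abs_mul, abs_of_nonneg ht] at h2
  rw [abs_mul, add_mul, one_mul, exp_add, mul_comm (exp _)]
  exact mul_le_mul h1 h2 (abs_nonneg _) (exp_pos _).le

lemma exp_mul_sub_mul_cosh_le (b : ℝ) {x : ℝ} (hx : 0 < x) (t : ℝ) :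
    exp (b * t - x * cosh t) ≤ exp ((b + 1) ^ 2 / x) * exp (-t) := by
  rw [← exp_add, exp_le_exp]
  have hsq : (b + 1) * t - x * (t ^ 2 / 4) ≤ (b + 1) ^ 2 / x := by
    rw [le_div_iff₀ hx]
    nlinarith [sq_nonneg (x * t - 2 * (b + 1))]
  nlinarith [mul_le_mul_of_nonneg_left (sq_div_four_le_cosh t) hx.le]

lemma integrableOn_exp_mul_sub_mul_cosh (b : ℝ) {x : ℝ} (hx : 0 < x) :
    IntegrableOn (fun t => exp (b * t - x * cosh t)) (Ioi 0) := by
  refine Integrable.mono' ((exp_neg_integrableOn_Ioi 0 one_pos).const_mul (exp ((b + 1) ^ 2 / x)))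
    (by fun_prop) (ae_of_all _ fun t => ?_)
  rw [norm_of_nonneg (exp_pos _).le, neg_one_mul]
  exact exp_mul_sub_mul_cosh_le b hx t

lemma tendsto_exp_mul_sub_mul_cosh (b : ℝ) {x : ℝ} (hx : 0 < x) :
    Tendsto (fun t => exp (b * t - x * cosh t)) atTop (𝓝 0) := by
  refine squeeze_zero (fun t => (exp_pos _).le) (exp_mul_sub_mul_cosh_le b hx) ?_
  simpa using tendsto_exp_neg_atTop_nhds_zero.const_mul (exp ((b + 1) ^ 2 / x))

section Dominated

variable {x b : ℝ} {g : ℝ → ℝ}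

lemma abs_exp_neg_mul_cosh_mul_le {t : ℝ} (hg : |g t| ≤ exp (b * t)) :
    |exp (-(x * cosh t)) * g t| ≤ exp (b * t - x * cosh t) := by
  rw [abs_mul, abs_of_pos (exp_pos _), sub_eq_add_neg, exp_add, mul_comm (exp (b * t))]
  exact mul_le_mul_of_nonneg_left hg (exp_pos _).le

lemma integrableOn_exp_neg_mul_cosh_mul (hx : 0 < x) (hg : Continuous g)
    (hgb : ∀ t, 0 ≤ t → |g t| ≤ exp (b * t)) :
    IntegrableOn (fun t => exp (-(x * cosh t)) * g t) (Ioi 0) :=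
  Integrable.mono' (integrableOn_exp_mul_sub_mul_cosh b hx) (by fun_prop)
    (ae_restrict_of_forall_mem measurableSet_Ioi fun t ht =>
      abs_exp_neg_mul_cosh_mul_le (hgb t (le_of_lt ht)))

lemma tendsto_exp_neg_mul_cosh_mul (hx : 0 < x) (hgb : ∀ t, 0 ≤ t → |g t| ≤ exp (b * t)) :
    Tendsto (fun t => exp (-(x * cosh t)) * g t) atTop (𝓝 0) :=
  squeeze_zero_norm' ((eventually_ge_atTop 0).mono fun t ht =>
    abs_exp_neg_mul_cosh_mul_le (hgb t ht)) (tendsto_exp_mul_sub_mul_cosh b hx)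

end Dominated

lemma integrableOn_besselK_integrand {x : ℝ} (hx : 0 < x) (ν : ℝ) :
    IntegrableOn (fun t => exp (-(x * cosh t)) * cosh (ν * t)) (Ioi 0) :=
  integrableOn_exp_neg_mul_cosh_mul hx (by fun_prop) fun t ht =>
    (abs_cosh_le_exp_abs _).trans_eq (by rw [abs_mul, abs_of_nonneg ht])

lemma integral_exp_neg_mul_cosh_mul_sinh_mul_sinh {x : ℝ} (hx : 0 < x) (ν : ℝ) :
    ∫ t in Ioi 0, exp (-(x * cosh t)) * (sinh t * sinh (ν * t)) = ν / x * besselK ν x := by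
  have hderiv : ∀ t, HasDerivAt (fun t => -(exp (-(x * cosh t)) * sinh (ν * t)) / x)
      (exp (-(x * cosh t)) * (sinh t * sinh (ν * t)) -
        ν / x * (exp (-(x * cosh t)) * cosh (ν * t))) t := fun t => by
    have hexp : HasDerivAt (fun t => exp (-(x * cosh t))) (exp (-(x * cosh t)) * -(x * sinh t)) t :=
      ((hasDerivAt_cosh t).const_mul x).neg.exp
    have hsinh : HasDerivAt (fun t => sinh (ν * t)) (cosh (ν * t) * ν) t :=
      (hasDerivAt_sinh _).comp t (by simpa using (hasDerivAt_id t).const_mul ν)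
    refine ((hexp.mul hsinh).neg.div_const x).congr_deriv ?_
    field_simp
    ring
  have hsinh := integrableOn_exp_neg_mul_cosh_mul hx (by fun_prop) fun t ht =>
    abs_sinh_mul_sinh_le ν ht
  have hftc := integral_Ioi_of_hasDerivAt_of_tendsto' (fun t _ => hderiv t)
    (hsinh.sub ((integrableOn_besselK_integrand hx ν).const_mul (ν / x)))
    (by simpa using ((tendsto_exp_neg_mul_cosh_mul hx fun t ht =>
      (abs_sinh_le_exp_abs (ν * t)).trans_eq (by rw [abs_mul, abs_of_nonneg ht])).neg.div_const x))
  rw [integral_sub hsinh ((integrableOn_besselK_integrand hx ν).const_mul _),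
    integral_const_mul] at hftc
  simp only [mul_zero, sinh_zero, neg_zero, zero_div, sub_zero] at hftc
  rw [besselK]
  linarith

lemma integral_exp_neg_mul_cosh_mul_cosh_mul_cosh {x : ℝ} (hx : 0 < x) (ν : ℝ) :
    ∫ t in Ioi 0, exp (-(x * cosh t)) * (cosh t * cosh (ν * t)) =
      besselK (ν + 1) x - ν / x * besselK ν x := by
  have hsplit : besselK (ν + 1) x = ∫ t in Ioi 0,
      (exp (-(x * cosh t)) * (cosh t * cosh (ν * t)) +
        exp (-(x * cosh t)) * (sinh t * sinh (ν * t))) := by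
    unfold besselK
    congr 1 with t
    rw [add_mul, one_mul, add_comm (ν * t), cosh_add]
    ring
  rw [integral_add (integrableOn_exp_neg_mul_cosh_mul hx (by fun_prop) fun t ht =>
      abs_cosh_mul_cosh_le ν ht) (integrableOn_exp_neg_mul_cosh_mul hx (by fun_prop) fun t ht =>
      abs_sinh_mul_sinh_le ν ht),
    integral_exp_neg_mul_cosh_mul_sinh_mul_sinh hx] at hsplit
  linarith

lemma hasDerivAt_besselK {x : ℝ} (hx : 0 < x) (ν : ℝ) :
    HasDerivAt (besselK ν) (ν / x * besselK ν x - besselK (ν + 1) x) x := by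
  have hball : ∀ y ∈ Metric.ball x (x / 2), x / 2 < y := fun y hy => by
    rw [Metric.mem_ball, Real.dist_eq, abs_lt] at hy
    linarith
  have hbound : ∀ t ∈ Ioi (0 : ℝ), ∀ y ∈ Metric.ball x (x / 2),
      ‖-(exp (-(y * cosh t)) * (cosh t * cosh (ν * t)))‖ ≤
        exp ((|ν| + 1) * t - x / 2 * cosh t) := fun t ht y hy => by
    rw [norm_neg, norm_eq_abs]
    refine le_trans ?_ (abs_exp_neg_mul_cosh_mul_le (g := fun t => cosh t * cosh (ν * t))
      (abs_cosh_mul_cosh_le ν (le_of_lt ht)))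
    rw [abs_mul, abs_mul _ (_ * _), abs_of_pos (exp_pos _), abs_of_pos (exp_pos _)]
    gcongr
    exact (hball y hy).le
  have hdiff : ∀ t : ℝ, ∀ y : ℝ, HasDerivAt (fun y => exp (-(y * cosh t)) * cosh (ν * t))
      (-(exp (-(y * cosh t)) * (cosh t * cosh (ν * t)))) y := fun t y => by
    have hexp : HasDerivAt (fun y => -(y * cosh t)) (-cosh t) y := (hasDerivAt_mul_const _).neg
    exact (hexp.exp.mul_const (cosh (ν * t))).congr_deriv (by ring)
  have h := hasDerivAt_integral_of_dominated_loc_of_deriv_le (μ := volume.restrict (Ioi 0))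
    (F := fun y t => exp (-(y * cosh t)) * cosh (ν * t))
    (Metric.ball_mem_nhds x (half_pos hx)) (Eventually.of_forall fun y => by fun_prop)
    (integrableOn_besselK_integrand hx ν) (by fun_prop)
    (ae_restrict_of_forall_mem measurableSet_Ioi hbound)
    (integrableOn_exp_mul_sub_mul_cosh (|ν| + 1) (half_pos hx))
    (ae_of_all _ fun t y _ => hdiff t y)
  rw [integral_neg, integral_exp_neg_mul_cosh_mul_cosh_mul_cosh hx] at h
  exact h.2.congr_deriv (by ring)

lemma setIntegral_pos_of_forall_pos {X : Type*} [MeasurableSpace X] {μ : Measure X} {s : Set X}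
    {f : X → ℝ} (hs : MeasurableSet s) (hμs : 0 < μ s) (hf : IntegrableOn f s μ)
    (hpos : ∀ t ∈ s, 0 < f t) :
    0 < ∫ t in s, f t ∂μ := by
  have hsupp : Function.support f ∩ s = s := inter_eq_right.2 fun t ht => (hpos t ht).ne'
  rwa [setIntegral_pos_iff_support_of_nonneg_ae
    (ae_restrict_of_forall_mem hs fun t ht => (hpos t ht).le) hf, hsupp]

lemma besselK_pos {x : ℝ} (hx : 0 < x) (ν : ℝ) : 0 < besselK ν x :=
  setIntegral_pos_of_forall_pos measurableSet_Ioi (by simp) (integrableOn_besselK_integrand hx ν)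
    fun t _ => by positivity

lemma besselK_le_exp_sub_mul {x t : ℝ} (hx : 0 < x) (hxt : x ≤ t) (ν : ℝ) :
    besselK ν t ≤ exp (x - t) * besselK ν x := by
  rw [besselK, besselK, ← integral_const_mul]
  refine setIntegral_mono_on (integrableOn_besselK_integrand (hx.trans_le hxt) ν)
    ((integrableOn_besselK_integrand hx ν).const_mul _) measurableSet_Ioi fun s _ => ?_
  rw [← mul_assoc, ← exp_add]
  gcongr
  nlinarith [one_le_cosh s]

lemma besselK_div_rpow_isBigO (μ ν : ℝ) :
    (fun t => besselK μ t / t ^ ν) =O[atTop] fun t => exp (-(1 / 2) * t) := by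
  have hK : (fun t => besselK μ t) =O[atTop] fun t => exp (-t) := by
    refine IsBigO.of_bound (exp 1 * besselK μ 1) ?_
    filter_upwards [eventually_ge_atTop 1] with t ht
    rw [norm_of_nonneg (besselK_pos (one_pos.trans_le ht) μ).le, norm_of_nonneg (exp_pos _).le,
      mul_comm (exp 1), mul_assoc, ← exp_add, mul_comm]
    exact (besselK_le_exp_sub_mul one_pos ht μ).trans_eq (by ring_nf)
  have hpow : (fun t : ℝ => (t ^ ν)⁻¹) =O[atTop] fun t => exp (1 / 2 * t) := by
    refine (isLittleO_rpow_exp_pos_mul_atTop (-ν) one_half_pos).isBigO.congr' ?_ EventuallyEq.rfl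
    filter_upwards [eventually_gt_atTop 0] with t ht
    rw [rpow_neg ht.le]
  refine (hK.mul hpow).congr' (Eventually.of_forall fun t => div_eq_mul_inv _ _)
    (Eventually.of_forall fun t => ?_)
  dsimp only
  rw [← exp_add]
  ring_nf

lemma integrableOn_besselK_div_rpow (μ ν : ℝ) {x : ℝ} (hx : 0 < x) :
    IntegrableOn (fun t => besselK μ t / t ^ ν) (Ioi x) := by
  refine integrable_of_isBigO_exp_neg one_half_pos (fun t ht => ?_) (besselK_div_rpow_isBigO μ ν)
  have ht : 0 < t := hx.trans_le ht
  exact ((hasDerivAt_besselK ht μ).continuousAt.div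
    (continuousAt_rpow_const t ν (Or.inl ht.ne')) (rpow_pos_of_pos ht ν).ne').continuousWithinAt

lemma tendsto_besselK_div_rpow (μ ν : ℝ) :
    Tendsto (fun t => besselK μ t / t ^ ν) atTop (𝓝 0) :=
  (besselK_div_rpow_isBigO μ ν).trans_tendsto <|
    tendsto_exp_atBot.comp (tendsto_id.const_mul_atTop_of_neg (by norm_num))

lemma hasDerivAt_besselK_div_rpow (μ ν : ℝ) {x : ℝ} (hx : 0 < x) :
    HasDerivAt (fun t => besselK μ t / t ^ ν)
      ((μ - ν) * (besselK μ x / x ^ (ν + 1)) - besselK (μ + 1) x / x ^ ν) x := by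
  refine ((hasDerivAt_besselK hx μ).div (hasDerivAt_rpow_const (Or.inl hx.ne'))
    (rpow_pos_of_pos hx ν).ne').congr_deriv ?_
  rw [rpow_add hx, rpow_sub hx, rpow_one]
  have := (rpow_pos_of_pos hx ν).ne'
  field_simp
  ring

lemma integral_Ioi_besselK_add_one_div_rpow (μ ν : ℝ) {x : ℝ} (hx : 0 < x) :
    ∫ t in Ioi x, besselK (μ + 1) t / t ^ ν =
      besselK μ x / x ^ ν + (μ - ν) * ∫ t in Ioi x, besselK μ t / t ^ (ν + 1) := by
  have hint := integrableOn_besselK_div_rpow (μ + 1) ν hx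
  have hint' := (integrableOn_besselK_div_rpow μ (ν + 1) hx).const_mul (μ - ν)
  have hftc := integral_Ioi_of_hasDerivAt_of_tendsto (f := fun t => -(besselK μ t / t ^ ν))
    (f' := fun t => besselK (μ + 1) t / t ^ ν - (μ - ν) * (besselK μ t / t ^ (ν + 1)))
    (hasDerivAt_besselK_div_rpow μ ν hx).neg.continuousAt.continuousWithinAt
    (fun t ht => (hasDerivAt_besselK_div_rpow μ ν (hx.trans ht)).neg.congr_deriv (by ring))
    (hint.sub hint') (by simpa using (tendsto_besselK_div_rpow μ ν).neg)
  rw [integral_sub hint hint', integral_const_mul] at hftc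
  linarith

theorem stmt_2 (ν n : ℝ) :
    (n > 1 → ∀ x : ℝ, 0 < x →
      (∫ t in Ioi x, besselK (ν + n) t / t ^ ν) > besselK (ν + n - 1) x / x ^ ν) ∧
    (∀ x : ℝ, 0 < x →
      (∫ t in Ioi x, besselK (ν + 1) t / t ^ ν) = besselK ν x / x ^ ν) := by
  refine ⟨fun hn x hx => ?_, fun x hx => ?_⟩
  · have hrec := integral_Ioi_besselK_add_one_div_rpow (ν + n - 1) ν hx
    have htail : 0 < ∫ t in Ioi x, besselK (ν + n - 1) t / t ^ (ν + 1) :=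
      setIntegral_pos_of_forall_pos measurableSet_Ioi (by simp)
        (integrableOn_besselK_div_rpow _ _ hx) fun t ht =>
          div_pos (besselK_pos (hx.trans ht) _) (rpow_pos_of_pos (hx.trans ht) _)
    rw [sub_add_cancel, show ν + n - 1 - ν = n - 1 by ring] at hrec
    rw [hrec, gt_iff_lt, lt_add_iff_pos_right]
    exact mul_pos (sub_pos.2 hn) htail
  · simpa using integral_Ioi_besselK_add_one_div_rpow ν ν hx
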